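/- If G is quasi-strongly connected, then zero is a simple root of the minimal polynomial of the edge Laplacian L_e, i.e., the zero eigenvalue of L_e is semisimple (its geometric multiplicity equals its algebraic multiplicity L−N+1). -/

import Mathlib

/-!
Factor `L_e = f ∘ g` with `f = Eᵀ` and `g = E_⊙^w`; then `g ∘ f = E_⊙^w Eᵀ` is the weighted
in-degree Laplacian of `G`. By the maximum principle for this Laplacian, propagated backwards
along paths from the root, `g (f y)` is never a nonzero constant and vanishes only for constant
`y`, and the constants are exactly `ker Eᵀ`. This gives `ker L_e² = ker L_e` and
`rank L_e = rank Eᵀ = N - 1`. Once the kernel of `L_e²` equals that of `L_e`, the generalised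
0-eigenspace is `ker L_e`, so the minimal polynomial has at most a simple root at 0 and the
algebraic multiplicity of 0 equals `dim ker L_e`.
-/

open Matrix Polynomial

open LinearMap in
lemma ker_comp_sq_le_ker_comp {R V W : Type*} [Semiring R] [AddCommMonoid V] [Module R V]
    [AddCommMonoid W] [Module R W] {f : V →ₗ[R] W} {g : W →ₗ[R] V}
    (h₁ : ∀ v, f (g (f v)) = 0 → g (f v) = 0) (h₂ : ∀ v, g (f v) = 0 → f v = 0) :
    ker ((f ∘ₗ g) ^ 2) ≤ ker (f ∘ₗ g) :=
  fun w hw => h₂ (g w) (h₁ (g w) hw)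

section
open LinearMap Module

variable {K V W : Type*} [Field K] [AddCommGroup V] [Module K V] [AddCommGroup W] [Module K W]
  [FiniteDimensional K V] [FiniteDimensional K W] {f : V →ₗ[K] W} {g : W →ₗ[K] V}

lemma finrank_range_comp_eq_finrank_range
    (h₁ : ∀ v, f (g (f v)) = 0 → g (f v) = 0) (h₂ : ∀ v, g (f v) = 0 → f v = 0) :
    finrank K (range (f ∘ₗ g)) = finrank K (range f) := by
  have hker : ker (g ∘ₗ (f ∘ₗ g) ∘ₗ f) = ker f :=
    le_antisymm (fun v hv => h₂ v (h₁ v (h₂ _ hv))) fun v hv => by simp_all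
  have hrank : finrank K (range (g ∘ₗ (f ∘ₗ g) ∘ₗ f)) = finrank K (range f) := by
    have := (g ∘ₗ (f ∘ₗ g) ∘ₗ f).finrank_range_add_finrank_ker
    rw [hker, ← f.finrank_range_add_finrank_ker] at this
    omega
  refine le_antisymm (Submodule.finrank_mono (range_comp_le_range g f)) ?_
  calc finrank K (range f) = finrank K (range (g ∘ₗ (f ∘ₗ g) ∘ₗ f)) := hrank.symm
    _ ≤ finrank K (range ((f ∘ₗ g) ∘ₗ f)) := by
      rw [range_comp _ g]; exact Submodule.finrank_map_le _ _
    _ ≤ finrank K (range (f ∘ₗ g)) := Submodule.finrank_mono (range_comp_le_range _ _)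

lemma finrank_ker_comp_add_finrank
    (h₁ : ∀ v, f (g (f v)) = 0 → g (f v) = 0) (h₂ : ∀ v, g (f v) = 0 → f v = 0) :
    finrank K (ker (f ∘ₗ g)) + finrank K V = finrank K W + finrank K (ker f) := by
  have := (f ∘ₗ g).finrank_range_add_finrank_ker
  rw [finrank_range_comp_eq_finrank_range h₁ h₂] at this
  have := f.finrank_range_add_finrank_ker
  omega

end

section
open LinearMap Module

variable {K V : Type*} [Field K] [AddCommGroup V] [Module K V] {φ : Module.End K V}

lemma maxGenEigenspace_zero_eq_ker (h : ker (φ ^ 2) ≤ ker φ) :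
    φ.maxGenEigenspace 0 = ker φ := by
  have hstable := Module.End.ker_pow_constant (f := φ) (k := 1)
    (le_antisymm (by rw [pow_succ']; exact ker_le_ker_comp _ _) (by simpa using h))
  ext v
  simp only [Module.End.mem_maxGenEigenspace, zero_smul, sub_zero, mem_ker]
  refine ⟨fun ⟨k, hk⟩ => ?_, fun hv => ⟨1, by simpa using hv⟩⟩
  have : v ∈ ker (φ ^ (1 + k)) := by
    rw [mem_ker, pow_add, Module.End.mul_apply, hk, map_zero]
  simpa [← hstable k] using this

lemma rootMultiplicity_zero_charpoly_eq_finrank_ker [FiniteDimensional K V]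
    (h : ker (φ ^ 2) ≤ ker φ) :
    φ.charpoly.rootMultiplicity 0 = finrank K (ker φ) := by
  rw [← LinearMap.finrank_maxGenEigenspace_eq, maxGenEigenspace_zero_eq_ker h]

lemma rootMultiplicity_zero_minpoly_le_one (h : ker (φ ^ 2) ≤ ker φ) :
    (minpoly K φ).rootMultiplicity 0 ≤ 1 := by
  by_cases hp : minpoly K φ = 0
  · simp [hp]
  by_contra! h2
  obtain ⟨q, hq⟩ : X ^ 2 ∣ minpoly K φ := by
    simpa using (le_rootMultiplicity_iff hp).1 h2
  have hq0 : q ≠ 0 := by rintro rfl; exact hp (by simp [hq])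
  have hφq : φ * aeval φ q = 0 := by
    have hmin := minpoly.aeval K φ
    rw [hq, map_mul, map_pow, aeval_X] at hmin
    ext v
    exact h (show (φ ^ 2) (aeval φ q v) = 0 by rw [← Module.End.mul_apply, hmin]; rfl)
  have hdeg := natDegree_le_natDegree <|
    minpoly.degree_le_of_ne_zero K φ (mul_ne_zero X_ne_zero hq0) (by simp [hφq])
  rw [hq, natDegree_mul (pow_ne_zero 2 X_ne_zero) hq0, natDegree_mul X_ne_zero hq0,
    natDegree_X_pow, natDegree_X] at hdeg
  omega

end

section IncidenceMatrix

variable {V ε : Type*} [DecidableEq V]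

def IsArc (src tgt : ε → V) (a b : V) : Prop := ∃ k, src k = a ∧ tgt k = b

def incidenceMatrix (R : Type*) [Ring R] (src tgt : ε → V) : Matrix V ε R :=
  of fun i k => if i = src k then 1 else if i = tgt k then -1 else 0

def weightedInIncidenceMatrix {R : Type*} [Ring R] (tgt : ε → V) (w : ε → R) : Matrix V ε R :=
  of fun i k => if i = tgt k then -w k else 0

def inLaplacian [Fintype ε] {R : Type*} [CommRing R] (src tgt : ε → V) (w : ε → R) :
    Matrix V V R :=
  weightedInIncidenceMatrix tgt w * (incidenceMatrix R src tgt)ᵀ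

variable [Fintype V] {src tgt : ε → V}

lemma incidenceMatrix_transpose_mulVec_apply {R : Type*} [Ring R] (hst : ∀ k, src k ≠ tgt k)
    (y : V → R) (k : ε) :
    ((incidenceMatrix R src tgt)ᵀ *ᵥ y) k = y (src k) - y (tgt k) := by
  have hterm : ∀ i, incidenceMatrix R src tgt i k * y i =
      (if i = src k then y i else 0) - (if i = tgt k then y i else 0) := fun i => by
    by_cases hs : i = src k
    · simp [incidenceMatrix, hs, hst k]
    · by_cases ht : i = tgt k <;> simp [incidenceMatrix, hs, ht, Ne.symm (hst k)]
  simp only [mulVec, dotProduct, transpose_apply, hterm, Finset.sum_sub_distrib,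
    Finset.sum_ite_eq', Finset.mem_univ, if_true]

lemma eq_root_of_incidenceMatrix_transpose_mulVec_eq_zero {R : Type*} [Ring R]
    (hst : ∀ k, src k ≠ tgt k) {r : V} (hroot : ∀ i, Relation.ReflTransGen (IsArc src tgt) r i)
    {y : V → R} (hy : (incidenceMatrix R src tgt)ᵀ *ᵥ y = 0) (i : V) : y i = y r := by
  induction hroot i with
  | refl => rfl
  | tail _ harc ih =>
    obtain ⟨k, rfl, rfl⟩ := harc
    have hk := congrFun hy k
    rw [incidenceMatrix_transpose_mulVec_apply hst, Pi.zero_apply, sub_eq_zero] at hk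
    rw [← hk, ih]

open LinearMap Module in
lemma finrank_ker_incidenceMatrix_transpose {K : Type*} [Field K] [Fintype ε]
    (hst : ∀ k, src k ≠ tgt k) {r : V} (hroot : ∀ i, Relation.ReflTransGen (IsArc src tgt) r i) :
    finrank K (ker (incidenceMatrix K src tgt)ᵀ.mulVecLin) = 1 := by
  have hker : ker (incidenceMatrix K src tgt)ᵀ.mulVecLin = K ∙ (1 : V → K) := by
    ext y
    simp only [mem_ker, mulVecLin_apply, Submodule.mem_span_singleton]
    refine ⟨fun hy => ⟨y r, funext fun i => ?_⟩, ?_⟩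
    · simp [eq_root_of_incidenceMatrix_transpose_mulVec_eq_zero hst hroot hy i]
    · rintro ⟨a, rfl⟩
      ext k
      simp [incidenceMatrix_transpose_mulVec_apply hst]
  rw [hker, finrank_span_singleton]
  exact fun h => one_ne_zero (congrFun h r)

variable [Fintype ε] {R : Type*} [CommRing R] {w : ε → R}

lemma inLaplacian_mulVec_apply (hst : ∀ k, src k ≠ tgt k) (x : V → R) (i : V) :
    (inLaplacian src tgt w *ᵥ x) i = ∑ k with tgt k = i, w k * (x i - x (src k)) := by
  rw [inLaplacian, ← mulVec_mulVec, Finset.sum_filter]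
  refine Finset.sum_congr rfl fun k _ => ?_
  rw [incidenceMatrix_transpose_mulVec_apply hst]
  by_cases h : tgt k = i
  · subst h; simp [weightedInIncidenceMatrix]; ring
  · simp [weightedInIncidenceMatrix, h, Ne.symm h]

variable [LinearOrder R] [IsStrictOrderedRing R]

lemma inLaplacian_mulVec_nonneg_of_forall_le (hst : ∀ k, src k ≠ tgt k) (hw : ∀ k, 0 ≤ w k)
    {x : V → R} {i : V} (hi : ∀ j, x j ≤ x i) : 0 ≤ (inLaplacian src tgt w *ᵥ x) i := by
  rw [inLaplacian_mulVec_apply hst]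
  exact Finset.sum_nonneg fun k _ => mul_nonneg (hw k) (sub_nonneg.2 (hi _))

lemma src_eq_of_inLaplacian_mulVec_eq_zero (hst : ∀ k, src k ≠ tgt k) (hw : ∀ k, 0 < w k)
    {x : V → R} {k : ε} (hmax : ∀ j, x j ≤ x (tgt k))
    (h : (inLaplacian src tgt w *ᵥ x) (tgt k) = 0) : x (src k) = x (tgt k) := by
  rw [inLaplacian_mulVec_apply hst] at h
  have hk := (Finset.sum_eq_zero_iff_of_nonneg fun k _ =>
    mul_nonneg (hw k).le (sub_nonneg.2 (hmax _))).1 h k (by simp)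
  rw [mul_eq_zero, sub_eq_zero] at hk
  exact (hk.resolve_left (hw k).ne').symm

lemma inLaplacian_mulVec_eq_zero_of_eq_const (hst : ∀ k, src k ≠ tgt k) (hw : ∀ k, 0 ≤ w k)
    {x : V → R} {c : R} (h : inLaplacian src tgt w *ᵥ x = fun _ => c) :
    inLaplacian src tgt w *ᵥ x = 0 := by
  ext i
  have : Nonempty V := ⟨i⟩
  obtain ⟨imax, himax⟩ := Finite.exists_max x
  obtain ⟨imin, himin⟩ := Finite.exists_min x
  have hc : 0 ≤ c := congrFun h imax ▸ inLaplacian_mulVec_nonneg_of_forall_le hst hw himax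
  have hc' : 0 ≤ -c := by
    have := inLaplacian_mulVec_nonneg_of_forall_le hst hw (x := -x) (i := imin)
      fun j => neg_le_neg (himin j)
    rwa [mulVec_neg, Pi.neg_apply, h] at this
  rw [h]
  exact le_antisymm (neg_nonneg.1 hc') hc

lemma le_root_of_inLaplacian_mulVec_eq_zero (hst : ∀ k, src k ≠ tgt k) (hw : ∀ k, 0 < w k)
    {r : V} (hroot : ∀ i, Relation.ReflTransGen (IsArc src tgt) r i) {x : V → R}
    (h : inLaplacian src tgt w *ᵥ x = 0) (i : V) : x i ≤ x r := by
  have : Nonempty V := ⟨r⟩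
  obtain ⟨m, hm⟩ := Finite.exists_max x
  -- a maximum of `x` passes backwards along every arc into it, hence back to the root
  have hback : ∀ b, Relation.ReflTransGen (IsArc src tgt) r b → x b = x m → x r = x m := by
    intro b hb
    induction hb with
    | refl => exact id
    | tail _ harc ih =>
      obtain ⟨k, rfl, rfl⟩ := harc
      intro hk
      exact ih ((src_eq_of_inLaplacian_mulVec_eq_zero hst hw (hk ▸ hm) (congrFun h _)).trans hk)
  exact hback m (hroot m) rfl ▸ hm i

lemma eq_root_of_inLaplacian_mulVec_eq_zero (hst : ∀ k, src k ≠ tgt k) (hw : ∀ k, 0 < w k)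
    {r : V} (hroot : ∀ i, Relation.ReflTransGen (IsArc src tgt) r i) {x : V → R}
    (h : inLaplacian src tgt w *ᵥ x = 0) (i : V) : x i = x r := by
  have hneg : inLaplacian src tgt w *ᵥ (-x) = 0 := by rw [mulVec_neg, h, neg_zero]
  exact le_antisymm (le_root_of_inLaplacian_mulVec_eq_zero hst hw hroot h i)
    (neg_le_neg_iff.1 (le_root_of_inLaplacian_mulVec_eq_zero hst hw hroot hneg i))

lemma inLaplacian_mulVec_eq_zero_of_transpose_mulVec_eq_zero (hst : ∀ k, src k ≠ tgt k)
    (hw : ∀ k, 0 ≤ w k) {r : V} (hroot : ∀ i, Relation.ReflTransGen (IsArc src tgt) r i)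
    {x : V → R} (h : (incidenceMatrix R src tgt)ᵀ *ᵥ (inLaplacian src tgt w *ᵥ x) = 0) :
    inLaplacian src tgt w *ᵥ x = 0 :=
  inLaplacian_mulVec_eq_zero_of_eq_const hst hw
    (funext (eq_root_of_incidenceMatrix_transpose_mulVec_eq_zero hst hroot h))

lemma transpose_mulVec_eq_zero_of_inLaplacian_mulVec_eq_zero (hst : ∀ k, src k ≠ tgt k)
    (hw : ∀ k, 0 < w k) {r : V} (hroot : ∀ i, Relation.ReflTransGen (IsArc src tgt) r i)
    {x : V → R} (h : inLaplacian src tgt w *ᵥ x = 0) : (incidenceMatrix R src tgt)ᵀ *ᵥ x = 0 := by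
  have hconst := eq_root_of_inLaplacian_mulVec_eq_zero hst hw hroot h
  ext k
  rw [incidenceMatrix_transpose_mulVec_apply hst, hconst (src k), hconst (tgt k), sub_self,
    Pi.zero_apply]

end IncidenceMatrix

open LinearMap Module in
theorem edge_laplacian_zero_eigenvalue_semisimple_general
    (N L : ℕ) (src tgt : Fin L → Fin N) (hst : ∀ k, src k ≠ tgt k)
    (w : Fin L → ℝ) (hw : ∀ k, 0 < w k)
    (hqsc : ∃ r : Fin N, ∀ i : Fin N,
      Relation.ReflTransGen (fun a b => ∃ k : Fin L, src k = a ∧ tgt k = b) r i)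
    (E Eow : Matrix (Fin N) (Fin L) ℝ)
    (hE : ∀ i k, E i k = if i = src k then 1 else if i = tgt k then -1 else 0)
    (hEow : ∀ i k, Eow i k = if i = tgt k then -(w k) else 0) :
    Polynomial.rootMultiplicity 0 (minpoly ℝ (Eᵀ * Eow)) ≤ 1 ∧
    Module.finrank ℝ (LinearMap.ker (Eᵀ * Eow).mulVecLin) = L - (N - 1) ∧
    ((Eᵀ * Eow).map Complex.ofReal).charpoly.roots.count 0 = L - (N - 1) := by
  obtain ⟨r, hroot⟩ := hqsc
  obtain rfl : E = incidenceMatrix ℝ src tgt := Matrix.ext hE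
  obtain rfl : Eow = weightedInIncidenceMatrix tgt w := Matrix.ext hEow
  set A := (incidenceMatrix ℝ src tgt)ᵀ * weightedInIncidenceMatrix tgt w
  set f := (incidenceMatrix ℝ src tgt)ᵀ.mulVecLin
  set g := (weightedInIncidenceMatrix tgt w).mulVecLin
  have hgf (v) : g (f v) = inLaplacian src tgt w *ᵥ v := by
    simp only [f, g, mulVecLin_apply]; exact mulVec_mulVec v _ _
  have h₁ (v) (hv : f (g (f v)) = 0) : g (f v) = 0 := by
    rw [hgf] at hv ⊢
    exact inLaplacian_mulVec_eq_zero_of_transpose_mulVec_eq_zero hst (fun k => (hw k).le) hroot hv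
  have h₂ (v) (hv : g (f v) = 0) : f v = 0 :=
    transpose_mulVec_eq_zero_of_inLaplacian_mulVec_eq_zero hst hw hroot (hgf v ▸ hv)
  have hA : toLin' A = f ∘ₗ g := mulVecLin_mul _ _
  have hsq : ker (toLin' A ^ 2) ≤ ker (toLin' A) := hA ▸ ker_comp_sq_le_ker_comp h₁ h₂
  have hker : finrank ℝ (ker A.mulVecLin) = L - (N - 1) := by
    have := finrank_ker_comp_add_finrank h₁ h₂
    rw [finrank_ker_incidenceMatrix_transpose hst hroot, finrank_fin_fun, finrank_fin_fun] at this
    rw [← toLin'_apply', hA]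
    have := r.pos
    omega
  refine ⟨?_, hker, ?_⟩
  · rw [← minpoly_toLin']
    exact rootMultiplicity_zero_minpoly_le_one hsq
  · rw [count_roots]
    change rootMultiplicity (Complex.ofRealHom 0) (A.map Complex.ofRealHom).charpoly = _
    rw [charpoly_map, ← eq_rootMultiplicity_map Complex.ofReal_injective, ← charpoly_toLin',
      rootMultiplicity_zero_charpoly_eq_finrank_ker hsq, toLin'_apply', hker]

/-- If `G` is quasi-strongly connected, then zero is a simple root of the
minimal polynomial of the edge Laplacian `L_e = Eᵀ * E_⊙^w`, i.e. the zero eigenvalue of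
`L_e` is semisimple: its geometric multiplicity (the dimension of the kernel) equals its
algebraic multiplicity `L − N + 1`. -/
theorem edge_laplacian_zero_eigenvalue_semisimple
    (N L : ℕ) (hN : 0 < N) (src tgt : Fin L → Fin N) (hst : ∀ k, src k ≠ tgt k)
    (w : Fin L → ℝ) (hw : ∀ k, 0 < w k)
    (hqsc : ∃ r : Fin N, ∀ i : Fin N,
      Relation.ReflTransGen (fun a b => ∃ k : Fin L, src k = a ∧ tgt k = b) r i)
    (E Eow : Matrix (Fin N) (Fin L) ℝ)
    (hE : ∀ i k, E i k = if i = src k then 1 else if i = tgt k then -1 else 0)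
    (hEow : ∀ i k, Eow i k = if i = tgt k then -(w k) else 0) :
    Polynomial.rootMultiplicity 0 (minpoly ℝ (Eᵀ * Eow)) ≤ 1 ∧
    Module.finrank ℝ (LinearMap.ker (Eᵀ * Eow).mulVecLin) = L - (N - 1) ∧
    ((Eᵀ * Eow).map Complex.ofReal).charpoly.roots.count 0 = L - (N - 1) :=
  edge_laplacian_zero_eigenvalue_semisimple_general N L src tgt hst w hw hqsc E Eow hE hEow
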